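/- For all v, w ∈ W, the expansion coefficients of δ_w in the two Demazure–Lusztig bases are related by ( ∏_{α∈Φ⁺, w^{−1}α∈−Φ⁺} (q−e^{α})/(1−e^{−α}) ) · b⁺_{w,v} = ( ∏_{α∈Φ⁺, w^{−1}α∈−Φ⁺} (1−q e^{−α})/(1−e^{α}) ) · b⁻_{w,v}, where b⁺_{w,v}, b⁻_{w,v} ∈ Q are the unique coefficients with δ_w = Σ_{v∈W} b⁺_{w,v}·τ⁺_v = Σ_{v∈W} b⁻_{w,v}·τ⁻_v as operators on Q. -/

import Mathlib

/-
STATEMENT 7: For all v, w ∈ W, the expansion coefficients of δ_w in the two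
Demazure–Lusztig bases are related by
( ∏_{α∈Φ⁺, w⁻¹α∈−Φ⁺} (q−e^{α})/(1−e^{−α}) ) · b⁺_{w,v}
  = ( ∏_{α∈Φ⁺, w⁻¹α∈−Φ⁺} (1−q e^{−α})/(1−e^{α}) ) · b⁻_{w,v},
where b^±_{w,v} are the unique coefficients with
δ_w = Σ_v b⁺_{w,v}·τ⁺_v = Σ_v b⁻_{w,v}·τ⁻_v as operators on Q.
-/

open scoped Classical

set_option maxHeartbeats 1000000
set_option synthInstance.maxHeartbeats 400000

noncomputable section

/-- `Q = Frac(ℤ[q^{1/2},q^{-1/2}][Λ])`. -/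
abbrev Qf (Λ : Type*) [AddCommGroup Λ] : Type _ :=
  FractionRing (AddMonoidAlgebra (LaurentPolynomial ℤ) Λ)

/-- `e^λ ∈ Q`. -/
def E {Λ : Type*} [AddCommGroup Λ] (l : Λ) : Qf Λ :=
  algebraMap (AddMonoidAlgebra (LaurentPolynomial ℤ) Λ) (Qf Λ) (AddMonoidAlgebra.single l 1)

/-- `q^{1/2} ∈ Q`. -/
def qh (Λ : Type*) [AddCommGroup Λ] : Qf Λ :=
  algebraMap (AddMonoidAlgebra (LaurentPolynomial ℤ) Λ) (Qf Λ)
    (AddMonoidAlgebra.single 0 (LaurentPolynomial.T 1))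

/-- The multiplicative automorphism group structure on `Λ ≃+ Λ` (composition), as `AddAut` had
in the older Mathlib. -/
instance addEquivSelfGroup (A : Type*) [Add A] : Group (A ≃+ A) where
  mul g h := AddEquiv.trans h g
  one := AddEquiv.refl _
  inv := AddEquiv.symm
  mul_assoc _ _ _ := rfl
  one_mul _ := rfl
  mul_one _ := rfl
  inv_mul_cancel := AddEquiv.self_trans_symm

variable {n : ℕ} {W : Type*} [Group W] {M : CoxeterMatrix (Fin n)} (cs : CoxeterSystem M W)
variable {Λ : Type*} [AddCommGroup Λ] [IsDomain (AddMonoidAlgebra (LaurentPolynomial ℤ) Λ)]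

/-- The Demazure–Lusztig operator `τ⁺_i`. -/
def tauP (α : Fin n → Λ) (π : W →* (Qf Λ ≃+* Qf Λ)) (i : Fin n) (p : Qf Λ) : Qf Λ :=
  (qh Λ ^ 2 - 1) / (1 - E (α i)) * p +
    (qh Λ ^ 2 - E (α i)) / (1 - E (-(α i))) * (π (cs.simple i) p)

/-- The Demazure–Lusztig operator `τ⁻_i`. -/
def tauM (α : Fin n → Λ) (π : W →* (Qf Λ ≃+* Qf Λ)) (i : Fin n) (p : Qf Λ) : Qf Λ :=
  (qh Λ ^ 2 - 1) / (1 - E (α i)) * p +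
    (1 - qh Λ ^ 2 * E (-(α i))) / (1 - E (α i)) * (π (cs.simple i) p)

/-- Composite `τ⁺_{i_1} ∘ ⋯ ∘ τ⁺_{i_l}` along a word `ω = [i_1, …, i_l]`. -/
def tauPcomp (α : Fin n → Λ) (π : W →* (Qf Λ ≃+* Qf Λ)) (ω : List (Fin n)) : Qf Λ → Qf Λ :=
  ω.foldr (fun i g => tauP cs α π i ∘ g) id

/-- Composite `τ⁻_{i_1} ∘ ⋯ ∘ τ⁻_{i_l}` along a word `ω = [i_1, …, i_l]`. -/
def tauMcomp (α : Fin n → Λ) (π : W →* (Qf Λ ≃+* Qf Λ)) (ω : List (Fin n)) : Qf Λ → Qf Λ :=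
  ω.foldr (fun i g => tauM cs α π i ∘ g) id

set_option linter.unusedSectionVars false
set_option linter.unusedVariables false

lemma algMap_inj : Function.Injective
    (algebraMap (AddMonoidAlgebra (LaurentPolynomial ℤ) Λ) (Qf Λ)) :=
  IsFractionRing.injective _ _

lemma E_add (x y : Λ) : E (x + y) = E x * E y := by
  rw [E, E, E, ← map_mul, AddMonoidAlgebra.single_mul_single, mul_one]

lemma E_zero : E (0 : Λ) = 1 := by
  rw [E]
  have : (AddMonoidAlgebra.single (0:Λ) (1:LaurentPolynomial ℤ)) = 1 := rfl
  rw [this, map_one]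

lemma E_ne_zero (x : Λ) : E x ≠ 0 := by
  rw [E, ← map_zero (algebraMap (AddMonoidAlgebra (LaurentPolynomial ℤ) Λ) (Qf Λ))]
  intro h
  have := algMap_inj h
  exact one_ne_zero (AddMonoidAlgebra.single_eq_zero.mp this)

lemma E_injective : Function.Injective (E (Λ := Λ)) := by
  intro x y h
  have := algMap_inj h
  have h2 := AddMonoidAlgebra.single_inj.mp this
  rcases h2 with ⟨h3, _⟩ | ⟨h3, _⟩
  · exact h3
  · exact absurd h3 one_ne_zero

lemma E_neg_mul (x : Λ) : E (-x) * E x = 1 := by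
  rw [← E_add, neg_add_cancel, E_zero]

lemma qh_sq : qh Λ ^ 2 = algebraMap (AddMonoidAlgebra (LaurentPolynomial ℤ) Λ) (Qf Λ)
    (AddMonoidAlgebra.single 0 (LaurentPolynomial.T 2)) := by
  rw [qh, sq, ← map_mul, AddMonoidAlgebra.single_mul_single, add_zero,
    ← LaurentPolynomial.T_add]
  norm_num

lemma qh_sq_sub_E_ne_zero {x : Λ} (hx : x ≠ 0) : qh Λ ^ 2 - E x ≠ 0 := by
  rw [qh_sq, E, sub_ne_zero]
  intro h
  have := algMap_inj h
  rcases AddMonoidAlgebra.single_inj.mp this with ⟨h3, _⟩ | ⟨h3, _⟩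
  · exact hx h3.symm
  · exact (LaurentPolynomial.isUnit_T 2).ne_zero h3

lemma one_sub_E_ne_zero {x : Λ} (hx : x ≠ 0) : (1 : Qf Λ) - E x ≠ 0 := by
  have : (1 : Qf Λ) = E (0 : Λ) := E_zero.symm
  rw [this, sub_ne_zero]
  exact fun h => hx (E_injective h.symm)

lemma E_sum {ι : Type*} (F : Finset ι) (f : ι → Λ) : E (∑ a ∈ F, f a) = ∏ a ∈ F, E (f a) := by
  classical
  induction F using Finset.cons_induction with
  | empty => simp [E_zero]
  | cons a s ha ih => rw [Finset.sum_cons, Finset.prod_cons, E_add, ih]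

lemma key_factor (a : Λ) :
    (qh Λ ^ 2 - E a) / (1 - E (-a)) * (E (-a) * E (-a)) =
      (1 - qh Λ ^ 2 * E (-a)) / (1 - E a) := by
  have hEa : E (-a) * E a = 1 := E_neg_mul a
  have h1 : (1 : Qf Λ) - E (-a) = (-E (-a)) * (1 - E a) := by
    linear_combination -hEa
  have h2 : (qh Λ ^ 2 - E a) * (E (-a) * E (-a)) = (-E (-a)) * (1 - qh Λ ^ 2 * E (-a)) := by
    linear_combination (-E (-a)) * hEa
  rw [div_mul_eq_mul_div, h2, h1, mul_div_mul_left _ _ (neg_ne_zero.mpr (E_ne_zero (-a)))]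

lemma key_factor' (a : Λ) :
    (1 - qh Λ ^ 2 * E (-a)) / (1 - E a) * (E a * E a) = (qh Λ ^ 2 - E a) / (1 - E (-a)) := by
  have hEa : E (-a) * E a = 1 := E_neg_mul a
  have h2 : (E (-a) * E (-a)) * (E a * E a) = 1 := by
    linear_combination (E (-a) * E a + 1) * hEa
  rw [← key_factor a, mul_assoc, h2, mul_one]


section CoxLemmas

variable (σ : W →* (Λ ≃+ Λ)) (Φp : Finset Λ) (α : Fin n → Λ) (αv : Fin n → (Λ →+ ℤ))

lemma sigma_sq (i : Fin n) (x : Λ) : σ (cs.simple i) (σ (cs.simple i) x) = x := by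
  have h : σ (cs.simple i) (σ (cs.simple i) x) = σ (cs.simple i * cs.simple i) x := by
    rw [map_mul]; rfl
  rw [h, cs.simple_mul_simple_self, map_one]; rfl

lemma sigma_inv_apply (w : W) (x : Λ) : σ w (σ w⁻¹ x) = x := by
  have h : σ w (σ w⁻¹ x) = σ (w * w⁻¹) x := by rw [map_mul]; rfl
  rw [h, mul_inv_cancel, map_one]; rfl

lemma simple_neg_root (hrefl : ∀ (i : Fin n) (l : Λ), σ (cs.simple i) l = l - αv i l • α i)
    (hpair : ∀ i, αv i (α i) = 2) (i : Fin n) :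
    σ (cs.simple i) (α i) = -(α i) := by
  rw [hrefl, hpair, two_smul]; abel

lemma alpha_ne_zero (hpair : ∀ i, αv i (α i) = 2) (i : Fin n) : α i ≠ 0 := by
  intro h
  have := hpair i
  rw [h, map_zero] at this
  norm_num at this

lemma sigma_closure
    (hαmem : ∀ i, α i ∈ Φp)
    (hrefl : ∀ (i : Fin n) (l : Λ), σ (cs.simple i) l = l - αv i l • α i)
    (hpair : ∀ i, αv i (α i) = 2)
    (hperm : ∀ i, ∀ b ∈ Φp, b ≠ α i → σ (cs.simple i) b ∈ Φp)
    (u : W) :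
    ∀ b : Λ, (b ∈ Φp ∨ -b ∈ Φp) → (σ u b ∈ Φp ∨ -(σ u b) ∈ Φp) := by
  induction u using cs.simple_induction with
  | one => intro b hb; simp only [map_one]; exact hb
  | mul w w' hw hw' =>
    intro b hb
    have h2 := hw (σ w' b) (hw' b hb)
    have h3 : σ (w * w') b = σ w (σ w' b) := by rw [map_mul]; rfl
    rw [h3]; exact h2
  | simple i =>
    intro b hb
    rcases hb with hb | hb
    · by_cases hbα : b = α i
      · subst hbα
        rw [simple_neg_root cs σ α αv hrefl hpair, neg_neg]
        right; exact hαmem i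
      · left; exact hperm i b hb hbα
    · by_cases hbα : -b = α i
      · have : b = -(α i) := by rw [← hbα, neg_neg]
        subst this
        rw [map_neg, simple_neg_root cs σ α αv hrefl hpair, neg_neg]
        left; exact hαmem i
      · right
        have := hperm i (-b) hb hbα
        rwa [map_neg] at this

lemma sigma_simple_sum
    (hαmem : ∀ i, α i ∈ Φp)
    (hrefl : ∀ (i : Fin n) (l : Λ), σ (cs.simple i) l = l - αv i l • α i)
    (hpair : ∀ i, αv i (α i) = 2)
    (hperm : ∀ i, ∀ b ∈ Φp, b ≠ α i → σ (cs.simple i) b ∈ Φp)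
    (hdisj : ∀ b ∈ Φp, -b ∉ Φp)
    (i : Fin n) :
    σ (cs.simple i) (∑ a ∈ Φp, a) = (∑ a ∈ Φp, a) - (α i + α i) := by
  have hmem : ∀ a ∈ Φp.erase (α i), σ (cs.simple i) a ∈ Φp.erase (α i) := by
    intro a ha
    rcases Finset.mem_erase.mp ha with ⟨ha1, ha2⟩
    refine Finset.mem_erase.mpr ⟨?_, hperm i a ha2 ha1⟩
    intro hc
    have : a = σ (cs.simple i) (α i) := by
      rw [← hc, sigma_sq]
    rw [simple_neg_root cs σ α αv hrefl hpair] at this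
    exact hdisj a ha2 (by rw [this, neg_neg]; exact hαmem i)
  have herase : ∑ a ∈ Φp.erase (α i), σ (cs.simple i) a = ∑ a ∈ Φp.erase (α i), a := by
    refine Finset.sum_nbij' (fun a => σ (cs.simple i) a) (fun a => σ (cs.simple i) a)
      hmem hmem ?_ ?_ ?_
    · intro a _; exact sigma_sq cs σ i a
    · intro a _; exact sigma_sq cs σ i a
    · intro a _; rfl
  rw [map_sum, ← Finset.sum_erase_add Φp _ (hαmem i),
    ← Finset.sum_erase_add Φp (fun a => a) (hαmem i), herase,
    simple_neg_root cs σ α αv hrefl hpair]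
  abel

lemma sum_root_identity
    (hαmem : ∀ i, α i ∈ Φp)
    (hrefl : ∀ (i : Fin n) (l : Λ), σ (cs.simple i) l = l - αv i l • α i)
    (hpair : ∀ i, αv i (α i) = 2)
    (hperm : ∀ i, ∀ b ∈ Φp, b ≠ α i → σ (cs.simple i) b ∈ Φp)
    (hdisj : ∀ b ∈ Φp, -b ∉ Φp)
    (w : W) :
    (∑ a ∈ Φp, a) - σ w (∑ a ∈ Φp, a)
      = (∑ a ∈ Φp.filter (fun a => -(σ w⁻¹ a) ∈ Φp), a)
        + (∑ a ∈ Φp.filter (fun a => -(σ w⁻¹ a) ∈ Φp), a) := by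
  have hclo := sigma_closure cs σ Φp α αv hαmem hrefl hpair hperm
  -- the map φ a = if -(σ w⁻¹ a) ∈ Φp then -(σ w⁻¹ a) else σ w⁻¹ a is a bijection of Φp
  have hA : ∑ a ∈ Φp, (if -(σ w⁻¹ a) ∈ Φp then -(σ w⁻¹ a) else σ w⁻¹ a) = ∑ b ∈ Φp, b := by
    refine Finset.sum_nbij' (fun a => if -(σ w⁻¹ a) ∈ Φp then -(σ w⁻¹ a) else σ w⁻¹ a)
      (fun b => if -(σ w b) ∈ Φp then -(σ w b) else σ w b) ?_ ?_ ?_ ?_ ?_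
    · intro a ha
      by_cases h : -(σ w⁻¹ a) ∈ Φp
      · simp only [if_pos h]; exact h
      · simp only [if_neg h]
        rcases hclo w⁻¹ a (Or.inl ha) with h2 | h2
        · exact h2
        · exact absurd h2 h
    · intro b hb
      by_cases h : -(σ w b) ∈ Φp
      · simp only [if_pos h]; exact h
      · simp only [if_neg h]
        rcases hclo w b (Or.inl hb) with h2 | h2
        · exact h2
        · exact absurd h2 h
    · intro a ha
      by_cases h : -(σ w⁻¹ a) ∈ Φp
      · simp only [if_pos h, map_neg, sigma_inv_apply, neg_neg, if_pos ha]
      · have h2 : σ w (σ w⁻¹ a) = a := sigma_inv_apply σ w a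
        simp only [if_neg h, h2, if_neg (hdisj a ha)]
    · intro b hb
      have h2 : σ w⁻¹ (σ w b) = b := by
        have := sigma_inv_apply σ w⁻¹ b
        rwa [inv_inv] at this
      by_cases h : -(σ w b) ∈ Φp
      · simp only [if_pos h, map_neg, h2, neg_neg, if_pos hb]
      · simp only [if_neg h, h2, if_neg (hdisj b hb)]
    · intro a _; rfl
  have hsplitA : ∑ a ∈ Φp, (if -(σ w⁻¹ a) ∈ Φp then -(σ w⁻¹ a) else σ w⁻¹ a)
      = (∑ a ∈ Φp.filter (fun a => -(σ w⁻¹ a) ∈ Φp), -(σ w⁻¹ a))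
        + (∑ a ∈ Φp.filter (fun a => ¬(-(σ w⁻¹ a) ∈ Φp)), σ w⁻¹ a) := by
    rw [← Finset.sum_filter_add_sum_filter_not Φp (fun a => -(σ w⁻¹ a) ∈ Φp)]
    congr 1
    · refine Finset.sum_congr rfl ?_
      intro a ha
      rw [if_pos (Finset.mem_filter.mp ha).2]
    · refine Finset.sum_congr rfl ?_
      intro a ha
      rw [if_neg (Finset.mem_filter.mp ha).2]
  have hB : σ w⁻¹ (∑ a ∈ Φp, a)
      = (∑ a ∈ Φp.filter (fun a => -(σ w⁻¹ a) ∈ Φp), σ w⁻¹ a)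
        + (∑ a ∈ Φp.filter (fun a => ¬(-(σ w⁻¹ a) ∈ Φp)), σ w⁻¹ a) := by
    rw [map_sum, ← Finset.sum_filter_add_sum_filter_not Φp (fun a => -(σ w⁻¹ a) ∈ Φp)]
  -- hence σ w⁻¹ s = s + ∑_F σ w⁻¹ a + ∑_F σ w⁻¹ a
  have hC : σ w⁻¹ (∑ a ∈ Φp, a)
      = (∑ a ∈ Φp, a) + ((∑ a ∈ Φp.filter (fun a => -(σ w⁻¹ a) ∈ Φp), σ w⁻¹ a)
        + (∑ a ∈ Φp.filter (fun a => -(σ w⁻¹ a) ∈ Φp), σ w⁻¹ a)) := by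
    rw [hB, ← hA, hsplitA, Finset.sum_neg_distrib]
    abel
  have hD := congrArg (σ w) hC
  simp only [map_add, map_sum, sigma_inv_apply] at hD
  rw [map_sum, hD]
  abel

lemma tauPcomp_cons (α : Fin n → Λ) (π : W →* (Qf Λ ≃+* Qf Λ)) (i : Fin n) (ω : List (Fin n))
    (p : Qf Λ) : tauPcomp cs α π (i :: ω) p = tauP cs α π i (tauPcomp cs α π ω p) := rfl

lemma tauMcomp_cons (α : Fin n → Λ) (π : W →* (Qf Λ ≃+* Qf Λ)) (i : Fin n) (ω : List (Fin n))
    (p : Qf Λ) : tauMcomp cs α π (i :: ω) p = tauM cs α π i (tauMcomp cs α π ω p) := rfl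

lemma tauM_conj (π : W →* (Qf Λ ≃+* Qf Λ))
    (hπE : ∀ (w : W) (l : Λ), π w (E l) = E (σ w l))
    (s0 : Λ) (hs0 : ∀ i : Fin n, σ (cs.simple i) s0 = s0 - (α i + α i))
    (ω : List (Fin n)) (p : Qf Λ) :
    tauMcomp cs α π ω (E (-s0) * p) = E (-s0) * tauPcomp cs α π ω p := by
  induction ω generalizing p with
  | nil => rfl
  | cons i ω ih =>
    have step : ∀ x : Qf Λ, tauM cs α π i (E (-s0) * x) = E (-s0) * tauP cs α π i x := by
      intro x
      have hσ : σ (cs.simple i) (-s0) = -s0 + (α i + α i) := by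
        rw [map_neg, hs0]; abel
      have hmul : π (cs.simple i) (E (-s0) * x)
          = (E (-s0) * (E (α i) * E (α i))) * π (cs.simple i) x := by
        rw [map_mul, hπE, hσ, E_add, E_add]
      rw [tauM, tauP, hmul]
      have hk := key_factor' (α i)
      linear_combination (E (-s0) * π (cs.simple i) x) * hk
    rw [tauMcomp_cons, tauPcomp_cons, ih p, step]

lemma tauPcomp_expand [Fintype W] (hα0 : ∀ i, α i ≠ 0)
    (π : W →* (Qf Λ ≃+* Qf Λ)) (ω : List (Fin n)) :
    ∃ d : W → Qf Λ,
      (∀ p : Qf Λ, tauPcomp cs α π ω p = ∑ x : W, d x * π x p) ∧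
      (∀ y : W, ω.length ≤ cs.length y → y ≠ cs.wordProd ω → d y = 0) ∧
      (cs.IsReduced ω → d (cs.wordProd ω) ≠ 0) := by
  induction ω with
  | nil =>
    refine ⟨fun x => if x = 1 then 1 else 0, ?_, ?_, ?_⟩
    · intro p
      rw [Finset.sum_eq_single 1]
      · have h1 : (1 : Qf Λ ≃+* Qf Λ) p = p := rfl
        simp [tauPcomp, map_one, h1]
      · intro b _ hb; simp [hb]
      · simp
    · intro y _ hy
      rw [cs.wordProd_nil] at hy
      simp [hy]
    · intro _
      rw [cs.wordProd_nil]
      simp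
  | cons i ω ih =>
    obtain ⟨d, hd1, hd2, hd3⟩ := ih
    refine ⟨fun y => (qh Λ ^ 2 - 1) / (1 - E (α i)) * d y +
      (qh Λ ^ 2 - E (α i)) / (1 - E (-(α i))) * π (cs.simple i) (d (cs.simple i * y)),
      ?_, ?_, ?_⟩
    · intro p
      rw [tauPcomp_cons, hd1, tauP]
      have h1 : π (cs.simple i) (∑ x : W, d x * π x p)
          = ∑ x : W, π (cs.simple i) (d x) * π (cs.simple i * x) p := by
        rw [map_sum]
        refine Finset.sum_congr rfl fun x _ => ?_
        rw [map_mul]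
        congr 1
        rw [map_mul]; rfl
      have h2 : ∑ x : W, π (cs.simple i) (d x) * π (cs.simple i * x) p
          = ∑ y : W, π (cs.simple i) (d (cs.simple i * y)) * π y p := by
        apply Fintype.sum_equiv (Equiv.mulLeft (cs.simple i))
        intro x
        simp only [Equiv.coe_mulLeft]
        rw [← mul_assoc, cs.simple_mul_simple_self, one_mul]
      rw [h1, h2, Finset.mul_sum, Finset.mul_sum, ← Finset.sum_add_distrib]
      exact Finset.sum_congr rfl fun x _ => by ring
    · intro y hlen hy
      rw [List.length_cons] at hlen
      rw [cs.wordProd_cons] at hy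
      have hdy : d y = 0 := by
        refine hd2 y (by omega) fun hc => ?_
        have := cs.length_wordProd_le ω
        rw [← hc] at this
        omega
      have hdy2 : d (cs.simple i * y) = 0 := by
        refine hd2 _ ?_ fun hc => ?_
        · rcases cs.length_simple_mul y i with h | h <;> omega
        · apply hy
          rw [← hc, ← mul_assoc, cs.simple_mul_simple_self, one_mul]
      beta_reduce
      rw [hdy, hdy2, map_zero, mul_zero, mul_zero, add_zero]
    · intro hred
      have hred' : cs.length (cs.wordProd (i :: ω)) = ω.length + 1 := hred
      rw [cs.wordProd_cons] at hred' ⊢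
      have hle := cs.length_wordProd_le ω
      have hle2 : cs.length (cs.simple i * cs.wordProd ω)
          ≤ 1 + cs.length (cs.wordProd ω) := by
        have := cs.length_mul_le (cs.simple i) (cs.wordProd ω)
        rwa [cs.length_simple] at this
      have hredω : cs.IsReduced ω := by
        unfold CoxeterSystem.IsReduced
        omega
      have hd_top : d (cs.simple i * cs.wordProd ω) = 0 := by
        refine hd2 _ (by omega) fun hc => ?_
        rw [hc] at hred'
        rw [hredω] at hred'
        omega
      have hkey : d (cs.simple i * (cs.simple i * cs.wordProd ω)) = d (cs.wordProd ω) := by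
        rw [← mul_assoc, cs.simple_mul_simple_self, one_mul]
      beta_reduce
      rw [hd_top, hkey, mul_zero, zero_add]
      refine mul_ne_zero ?_ ?_
      · exact div_ne_zero (qh_sq_sub_E_ne_zero (hα0 i))
          (one_sub_E_ne_zero (neg_ne_zero.mpr (hα0 i)))
      · intro hc
        exact hd3 hredω ((π (cs.simple i)).injective (by rw [hc, map_zero]))

lemma tau_indep [Fintype W] (hfaith : Function.Injective σ)
    (hα0 : ∀ i, α i ≠ 0)
    (π : W →* (Qf Λ ≃+* Qf Λ))
    (hπE : ∀ (w : W) (l : Λ), π w (E l) = E (σ w l))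
    (red : W → List (Fin n))
    (hred : ∀ v : W, cs.wordProd (red v) = v ∧ (red v).length = cs.length v)
    (c : W → Qf Λ)
    (hc : ∀ p : Qf Λ, ∑ u : W, c u * tauPcomp cs α π (red u) p = 0)
    (v : W) : c v = 0 := by
  choose d hd1 hd2 hd3 using fun u => tauPcomp_expand cs α hα0 π (red u)
  have hsum : ∀ p : Qf Λ, ∑ x : W, (∑ u : W, c u * d u x) * π x p = 0 := by
    intro p
    calc ∑ x : W, (∑ u : W, c u * d u x) * π x p
        = ∑ x : W, ∑ u : W, c u * (d u x * π x p) := by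
          refine Finset.sum_congr rfl fun x _ => ?_
          rw [Finset.sum_mul]
          exact Finset.sum_congr rfl fun u _ => by ring
      _ = ∑ u : W, ∑ x : W, c u * (d u x * π x p) := Finset.sum_comm
      _ = ∑ u : W, c u * tauPcomp cs α π (red u) p := by
          refine Finset.sum_congr rfl fun u _ => ?_
          rw [hd1 u, Finset.mul_sum]
      _ = 0 := hc p
  set χ : W → (Qf Λ →* Qf Λ) := fun x => (π x).toRingHom.toMonoidHom with hχ
  have hinj : Function.Injective χ := by
    intro x y hxy
    apply hfaith
    ext l
    have h1 : π x (E l) = π y (E l) := by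
      have := congrArg (fun f : Qf Λ →* Qf Λ => f (E l)) hxy
      exact this
    rw [hπE, hπE] at h1
    exact E_injective h1
  have hli := (linearIndependent_monoidHom (Qf Λ) (Qf Λ)).comp χ hinj
  have hco : ∀ x : W, ∑ u : W, c u * d u x = 0 := by
    have h0 : ∑ x : W, (∑ u : W, c u * d u x) • ((fun f : Qf Λ →* Qf Λ => (f : Qf Λ → Qf Λ)) ∘ χ) x = 0 := by
      funext p
      have h2 : (∑ x : W, (∑ u : W, c u * d u x) • ((fun f : Qf Λ →* Qf Λ => (f : Qf Λ → Qf Λ)) ∘ χ) x) p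
          = ∑ x : W, (∑ u : W, c u * d u x) * π x p := by
        rw [Finset.sum_apply]
        exact Finset.sum_congr rfl fun x _ => rfl
      rw [Pi.zero_apply] at *
      rw [h2, hsum p]
    exact Fintype.linearIndependent_iff.mp hli _ h0
  by_contra hv
  classical
  set T := Finset.univ.filter (fun u => c u ≠ 0) with hT
  have hTne : T.Nonempty := ⟨v, by simp [hT, hv]⟩
  obtain ⟨u₀, hu₀T, hmax⟩ := T.exists_max_image cs.length hTne
  have h0 := hco u₀
  rw [Finset.sum_eq_single u₀] at h0
  · have hred0 : cs.IsReduced (red u₀) := by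
      unfold CoxeterSystem.IsReduced
      rw [(hred u₀).1, (hred u₀).2]
    have hne := hd3 u₀ hred0
    rw [(hred u₀).1] at hne
    have hcu₀ : c u₀ = 0 := by
      rcases mul_eq_zero.mp h0 with h | h
      · exact h
      · exact absurd h hne
    exact (Finset.mem_filter.mp hu₀T).2 hcu₀
  · intro u _ hu
    by_cases hcu : c u = 0
    · rw [hcu, zero_mul]
    · have huT : u ∈ T := by simp [hT, hcu]
      have hd0 : d u u₀ = 0 := by
        refine hd2 u u₀ ?_ ?_
        · rw [(hred u).2]; exact hmax u huT
        · rw [(hred u).1]; exact fun hh => hu hh.symm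
      rw [hd0, mul_zero]
  · intro h
    exact absurd (Finset.mem_univ u₀) h

end CoxLemmas

theorem transition_between_Demazure_Lusztig_bases [Fintype W]
    (σ : W →* (Λ ≃+ Λ)) (hfaith : Function.Injective σ)
    (Φp : Finset Λ) (α : Fin n → Λ) (αv : Fin n → (Λ →+ ℤ))
    (hαmem : ∀ i, α i ∈ Φp)
    (hrefl : ∀ (i : Fin n) (l : Λ), σ (cs.simple i) l = l - αv i l • α i)
    (hpair : ∀ i, αv i (α i) = 2)
    (hperm : ∀ i, ∀ b ∈ Φp, b ≠ α i → σ (cs.simple i) b ∈ Φp)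
    (hdisj : ∀ b ∈ Φp, -b ∉ Φp)
    (hreduced : ∀ b ∈ Φp, b + b ∉ Φp)
    -- the action of W on Q, fixing q^{1/2}, with w(e^λ) = e^{wλ}; δ_w p = π w p
    (π : W →* (Qf Λ ≃+* Qf Λ))
    (hπE : ∀ (w : W) (l : Λ), π w (E l) = E (σ w l))
    (hπq : ∀ w : W, π w (qh Λ) = qh Λ)
    -- a choice of reduced word for each element of W, defining τ^±_v for v ∈ W
    (red : W → List (Fin n))
    (hred : ∀ v : W, cs.wordProd (red v) = v ∧ (red v).length = cs.length v)
    (w v : W) (bp bm : W → Qf Λ)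
    -- b⁺ and b⁻ are the coefficients of δ_w in the bases {τ⁺_u}, {τ⁻_u}
    (hbp : ∀ p : Qf Λ, π w p = ∑ u : W, bp u * tauPcomp cs α π (red u) p)
    (hbm : ∀ p : Qf Λ, π w p = ∑ u : W, bm u * tauMcomp cs α π (red u) p) :
    (∏ a ∈ Φp.filter (fun a => -(σ w⁻¹ a) ∈ Φp), (qh Λ ^ 2 - E a) / (1 - E (-a))) * bp v =
    (∏ a ∈ Φp.filter (fun a => -(σ w⁻¹ a) ∈ Φp), (1 - qh Λ ^ 2 * E (-a)) / (1 - E a)) * bm v := by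
  have hα0 : ∀ i, α i ≠ 0 := alpha_ne_zero α αv hpair
  set s0 : Λ := ∑ a ∈ Φp, a with hs0def
  have hs0 : ∀ i : Fin n, σ (cs.simple i) s0 = s0 - (α i + α i) :=
    fun i => sigma_simple_sum cs σ Φp α αv hαmem hrefl hpair hperm hdisj i
  have hconj := tauM_conj cs σ α π hπE s0 hs0
  have hkey : ∀ p : Qf Λ,
      π w p = ∑ u : W, (E (σ w s0 - s0) * bm u) * tauPcomp cs α π (red u) p := by
    intro p
    have h1 := hbm (E (-s0) * p)
    rw [map_mul, hπE, map_neg] at h1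
    have h2 : ∑ u : W, bm u * tauMcomp cs α π (red u) (E (-s0) * p)
        = ∑ u : W, bm u * (E (-s0) * tauPcomp cs α π (red u) p) :=
      Finset.sum_congr rfl fun u _ => by rw [hconj]
    rw [h2] at h1
    have hinv : E (σ w s0) * E (-(σ w s0)) = 1 := by
      rw [← E_add, add_neg_cancel, E_zero]
    calc π w p = (E (σ w s0) * E (-(σ w s0))) * π w p := by rw [hinv, one_mul]
      _ = E (σ w s0) * (E (-(σ w s0)) * π w p) := by ring
      _ = E (σ w s0) * (∑ u : W, bm u * (E (-s0) * tauPcomp cs α π (red u) p)) := by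
          rw [h1]
      _ = ∑ u : W, (E (σ w s0 - s0) * bm u) * tauPcomp cs α π (red u) p := by
          rw [Finset.mul_sum]
          refine Finset.sum_congr rfl fun u _ => ?_
          rw [sub_eq_add_neg, E_add]
          ring
  have hc : ∀ p : Qf Λ,
      ∑ u : W, (bp u - E (σ w s0 - s0) * bm u) * tauPcomp cs α π (red u) p = 0 := by
    intro p
    have := (hbp p).symm.trans (hkey p)
    rw [← sub_eq_zero] at this
    rw [← this, ← Finset.sum_sub_distrib]
    exact Finset.sum_congr rfl fun u _ => by ring
  have hbpv : bp v = E (σ w s0 - s0) * bm v := by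
    have := tau_indep cs σ α hfaith hα0 π hπE red hred _ hc v
    exact sub_eq_zero.mp this
  have hrprod :
      (∏ a ∈ Φp.filter (fun a => -(σ w⁻¹ a) ∈ Φp), (qh Λ ^ 2 - E a) / (1 - E (-a)))
        * E (σ w s0 - s0)
      = ∏ a ∈ Φp.filter (fun a => -(σ w⁻¹ a) ∈ Φp), (1 - qh Λ ^ 2 * E (-a)) / (1 - E a) := by
    have hsum := sum_root_identity cs σ Φp α αv hαmem hrefl hpair hperm hdisj w
    have hsub : σ w s0 - s0
        = (∑ a ∈ Φp.filter (fun a => -(σ w⁻¹ a) ∈ Φp), -a)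
          + (∑ a ∈ Φp.filter (fun a => -(σ w⁻¹ a) ∈ Φp), -a) := by
      rw [Finset.sum_neg_distrib, ← hs0def] at *
      rw [← hs0def] at hsum
      have h2 : σ w s0 - s0 = -(s0 - σ w s0) := by abel
      rw [h2, hsum]
      abel
    rw [hsub, E_add, E_sum]
    rw [← Finset.prod_mul_distrib, ← Finset.prod_mul_distrib]
    exact Finset.prod_congr rfl fun a _ => key_factor a
  rw [hbpv, ← mul_assoc, hrprod]
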